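/- Let c > 0, κ > 0, 𝓘_c(r) := √(r² + c²), and F(r) := exp(κ · 𝓘_c(r)). Then for all r, h ∈ ℝ one has |F(r + h) − F(r) − F'(r)·h| ≤ F(r) · F(|h|) · (κ² + κ/c) · h². -/

import Mathlib

/-!
With `g = κ 𝓘_c` one has `F'' = F · (g'² + g'')`, where `g' = κ r / 𝓘_c(r)` has modulus at most `κ`
and `g'' = κ c² / 𝓘_c(r)³ ≤ κ / c` because `𝓘_c ≥ c`. Since `𝓘_c` is 1-Lipschitz, on the segment
from `r` to `r + h` we have `𝓘_c ≤ 𝓘_c(r) + |h| ≤ 𝓘_c(r) + 𝓘_c(|h|)`, so `F ≤ F(r) F(|h|)` there.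
Two applications of the mean value theorem turn the bound on `F''` into the bound on the remainder.
-/

/-- The smooth approximation `𝓘_c(r) = √(r² + c²)` of the absolute value. -/
noncomputable def Ic (c r : ℝ) : ℝ := Real.sqrt (r ^ 2 + c ^ 2)

open Real Set Interval

theorem abs_sub_sub_deriv_mul_le {f f' f'' : ℝ → ℝ} {x h C : ℝ}
    (hf : ∀ y ∈ [[x, x + h]], HasDerivAt f (f' y) y)
    (hf' : ∀ y ∈ [[x, x + h]], HasDerivAt f' (f'' y) y)
    (hC : ∀ y ∈ [[x, x + h]], |f'' y| ≤ C) :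
    |f (x + h) - f x - f' x * h| ≤ C * h ^ 2 := by
  have hC₀ : 0 ≤ C := (abs_nonneg _).trans (hC x left_mem_uIcc)
  have hdist : ∀ y ∈ [[x, x + h]], |y - x| ≤ |h| := fun y hy => by
    simpa using abs_sub_left_of_mem_uIcc hy
  have hslope : ∀ y ∈ [[x, x + h]], ‖f' y - f' x‖ ≤ C * |h| := fun y hy =>
    calc ‖f' y - f' x‖ ≤ C * ‖y - x‖ :=
          (convex_uIcc x (x + h)).norm_image_sub_le_of_norm_hasDerivWithin_le
            (fun z hz => (hf' z hz).hasDerivWithinAt) hC left_mem_uIcc hy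
      _ ≤ C * |h| := mul_le_mul_of_nonneg_left (hdist y hy) hC₀
  have key := (convex_uIcc x (x + h)).norm_image_sub_le_of_norm_hasDerivWithin_le
    (f := fun y => f y - f' x * y)
    (fun y hy => ((hf y hy).sub ((hasDerivAt_id y).const_mul (f' x))).hasDerivWithinAt
      |>.congr_deriv (by simp)) hslope left_mem_uIcc right_mem_uIcc
  calc |f (x + h) - f x - f' x * h|
      = ‖(f (x + h) - f' x * (x + h)) - (f x - f' x * x)‖ := by
        rw [Real.norm_eq_abs]; ring_nf
    _ ≤ C * |h| * ‖x + h - x‖ := key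
    _ = C * h ^ 2 := by rw [add_sub_cancel_left, Real.norm_eq_abs, mul_assoc, ← sq, sq_abs]

theorem hasDerivAt_exp_mul_deriv {g g' : ℝ → ℝ} {g'' x : ℝ}
    (hg : ∀ y, HasDerivAt g (g' y) y) (hg' : HasDerivAt g' g'' x) :
    HasDerivAt (fun y => Real.exp (g y) * g' y) (Real.exp (g x) * (g' x ^ 2 + g'')) x :=
  ((hg x).exp.mul hg').congr_deriv (by ring)

section Ic

variable {c : ℝ}

theorem Ic_sq (c r : ℝ) : Ic c r ^ 2 = r ^ 2 + c ^ 2 :=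
  sq_sqrt (by positivity)

theorem Ic_pos (hc : c ≠ 0) (r : ℝ) : 0 < Ic c r :=
  sqrt_pos.2 (by positivity)

theorem abs_le_Ic (c r : ℝ) : |r| ≤ Ic c r :=
  abs_le_sqrt (by nlinarith [sq_nonneg c])

theorem abs_le_Ic_left (c r : ℝ) : |c| ≤ Ic c r :=
  abs_le_sqrt (by nlinarith [sq_nonneg r])

theorem Ic_add_le (c r h : ℝ) : Ic c (r + h) ≤ Ic c r + |h| := by
  rw [Ic, sqrt_le_left (by positivity [sqrt_nonneg (r ^ 2 + c ^ 2)])]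
  have : r * h ≤ Ic c r * |h| :=
    (le_abs_self _).trans (abs_mul r h ▸ mul_le_mul_of_nonneg_right (abs_le_Ic c r) (abs_nonneg h))
  nlinarith [Ic_sq c r, sq_abs h]

theorem Ic_le_add_Ic_abs_of_mem_uIcc {r h y : ℝ} (hy : y ∈ [[r, r + h]]) :
    Ic c y ≤ Ic c r + Ic c |h| :=
  calc Ic c y = Ic c (r + (y - r)) := by rw [add_sub_cancel]
    _ ≤ Ic c r + |y - r| := Ic_add_le c r (y - r)
    _ ≤ Ic c r + Ic c |h| := by
      have hdist : |y - r| ≤ |h| := by simpa using abs_sub_left_of_mem_uIcc hy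
      linarith [le_abs_self |h|, abs_le_Ic c |h|]

theorem hasDerivAt_Ic (hc : c ≠ 0) (r : ℝ) : HasDerivAt (Ic c) (r / Ic c r) r := by
  refine (((hasDerivAt_pow 2 r).add_const (c ^ 2)).sqrt (by positivity)).congr_deriv ?_
  have hI := (Ic_pos hc r).ne'
  rw [Ic] at hI ⊢
  field_simp
  norm_num

theorem hasDerivAt_div_Ic (hc : c ≠ 0) (r : ℝ) :
    HasDerivAt (fun y => y / Ic c y) (c ^ 2 / Ic c r ^ 3) r := by
  have hI := (Ic_pos hc r).ne'
  refine ((hasDerivAt_id' r).div (hasDerivAt_Ic hc r) hI).congr_deriv ?_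
  field_simp
  linear_combination Ic_sq c r

theorem div_Ic_sq_le_one (c r : ℝ) : (r / Ic c r) ^ 2 ≤ 1 := by
  rw [div_pow, Ic_sq]
  exact div_le_one_of_le₀ (by nlinarith [sq_nonneg c]) (by positivity)

theorem sq_div_Ic_pow_three_le (hc : 0 < c) (r : ℝ) : c ^ 2 / Ic c r ^ 3 ≤ 1 / c := by
  have hcI : c ≤ Ic c r := (le_abs_self c).trans (abs_le_Ic_left c r)
  rw [div_le_div_iff₀ (pow_pos (Ic_pos hc.ne' r) 3) hc]
  nlinarith [pow_le_pow_left₀ hc.le hcI 3]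

end Ic

/-- second-order Taylor estimate for `F = exp(κ 𝓘_c)` with `c, κ > 0`:
`|F(r+h) − F(r) − F'(r)h| ≤ F(r) F(|h|) (κ² + κ/c) h²`, where
`F'(r) = F(r)·κr/𝓘_c(r)`. -/
theorem taylor_estimate_exp_smoothed_abs (c κ : ℝ) (hc : 0 < c) (hκ : 0 < κ)
    (F : ℝ → ℝ) (hF : ∀ r, F r = Real.exp (κ * Ic c r)) :
    ∀ r h : ℝ,
      |F (r + h) - F r - F r * (κ * r / Ic c r) * h| ≤
        F r * F |h| * (κ ^ 2 + κ / c) * h ^ 2 := by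
  intro r h
  obtain rfl : F = fun r => Real.exp (κ * Ic c r) := funext hF
  have hg : ∀ y, HasDerivAt (fun y => κ * Ic c y) (κ * y / Ic c y) y := fun y => by
    simpa only [mul_div_assoc] using (hasDerivAt_Ic hc.ne' y).const_mul κ
  have hg' : ∀ y, HasDerivAt (fun y => κ * y / Ic c y) (κ * (c ^ 2 / Ic c y ^ 3)) y := fun y => by
    simpa only [mul_div_assoc] using (hasDerivAt_div_Ic hc.ne' y).const_mul κ
  refine abs_sub_sub_deriv_mul_le (fun y _ => (hg y).exp)
    (fun y _ => hasDerivAt_exp_mul_deriv hg (hg' y)) fun y hy => ?_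
  have hexp : Real.exp (κ * Ic c y) ≤ Real.exp (κ * Ic c r) * Real.exp (κ * Ic c |h|) := by
    rw [← Real.exp_add, ← mul_add]
    gcongr
    exact Ic_le_add_Ic_abs_of_mem_uIcc hy
  have hfactor : (κ * y / Ic c y) ^ 2 + κ * (c ^ 2 / Ic c y ^ 3) ≤ κ ^ 2 + κ / c := by
    rw [mul_div_assoc, mul_pow]
    gcongr
    · exact mul_le_of_le_one_right (by positivity) (div_Ic_sq_le_one c y)
    · exact (mul_le_mul_of_nonneg_left (sq_div_Ic_pow_three_le hc y) hκ.le).trans_eq (by ring)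
  have hIy := Ic_pos hc.ne' y
  rw [abs_of_nonneg (by positivity)]
  exact mul_le_mul hexp hfactor (by positivity) (by positivity)
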